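/- arXiv:2603.00276 — 3 statements merged into one kernel-verified Lean document; each statement's English description precedes it below -/
import Mathlib

section
/- Let G be a group and let A be a unital associative ℂ-algebra equipped with a star ring structure such that star is conjugate-linear (StarRing A, Algebra ℂ A, StarModule ℂ A). Let u : G →* unitary A be a group homomorphism into the unitary group of A, and let ω : A →ₗ[ℂ] ℂ be a linear functional such that 0 ≤ ω (star a * a) for every a ∈ A (using ComplexOrder). Define φ : G → ℂ by φ s = ω (star (u s : A)). Then φ is positive definite: for every n : ℕ, every s : Fin n → G and every ξ : Fin n → ℂ one has 0 ≤ ∑ j, ∑ k, ξ j * (starRingEnd ℂ) (ξ k) * φ ((s k)⁻¹ * s j). Moreover, if ω 1 = 1 then φ 1 = 1. -/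
open ComplexOrder

section

variable {ι A : Type*} [Fintype ι] [Ring A] [StarRing A] [Algebra ℂ A] [StarModule ℂ A]

theorem star_sum_smul_mul_sum_smul (ξ : ι → ℂ) (a : ι → A) :
    star (∑ i, star (ξ i) • a i) * ∑ i, star (ξ i) • a i =
      ∑ j, ∑ k, (ξ j * star (ξ k)) • (star (a j) * a k) := by
  rw [star_sum, Finset.sum_mul_sum]
  refine Finset.sum_congr rfl fun j _ => Finset.sum_congr rfl fun k _ => ?_
  rw [star_smul, star_star, smul_mul_smul_comm]

/-- The quadratic form is `ω (star b * b)` for `b = ∑ i, conj (ξ i) • a i`. -/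
theorem LinearMap.sum_sum_mul_conj_mul_apply_star_mul_nonneg (ω : A →ₗ[ℂ] ℂ)
    (hω : ∀ a : A, 0 ≤ ω (star a * a)) (ξ : ι → ℂ) (a : ι → A) :
    0 ≤ ∑ j, ∑ k, ξ j * starRingEnd ℂ (ξ k) * ω (star (a j) * a k) := by
  convert hω (∑ i, star (ξ i) • a i) using 1
  simp only [star_sum_smul_mul_sum_smul, map_sum, map_smul, smul_eq_mul, starRingEnd_apply]

end

theorem Unitary.star_coe_map_inv_mul {G A : Type*} [Group G] [Monoid A] [StarMul A]
    (u : G →* unitary A) (s t : G) :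
    star (u (t⁻¹ * s) : A) = star (u s : A) * u t := by
  rw [← Unitary.coe_star, ← Unitary.coe_star, Unitary.star_eq_inv, Unitary.star_eq_inv, map_mul,
    map_inv, mul_inv_rev, inv_inv]
  rfl

open ComplexOrder in
/-- If `u : G →* unitary A` is a unitary representation and `ω` is a positive linear
functional on `A`, then `φ s = ω (star (u s))` is a positive definite function,
normalized whenever `ω` is. -/
theorem stmt0 {G : Type*} [Group G] {A : Type*} [Ring A] [StarRing A] [Algebra ℂ A]
    [StarModule ℂ A] (u : G →* unitary A) (ω : A →ₗ[ℂ] ℂ)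
    (hω : ∀ a : A, 0 ≤ ω (star a * a))
    (φ : G → ℂ) (hφ : ∀ s : G, φ s = ω (star (u s : A))) :
    (∀ (n : ℕ) (s : Fin n → G) (ξ : Fin n → ℂ),
      0 ≤ ∑ j, ∑ k, ξ j * (starRingEnd ℂ) (ξ k) * φ ((s k)⁻¹ * s j)) ∧
    (ω 1 = 1 → φ 1 = 1) := by
  refine ⟨fun n s ξ => ?_, fun hω₁ => ?_⟩
  · simp only [hφ, Unitary.star_coe_map_inv_mul]
    exact ω.sum_sum_mul_conj_mul_apply_star_mul_nonneg hω ξ fun i => (u (s i) : A)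
  · rw [hφ, map_one, OneMemClass.coe_one, star_one, hω₁]
end

section
/- Let G be a finite group. The map φ ↦ ω_φ, where ω_φ : MonoidAlgebra ℂ G →ₗ[ℂ] ℂ is determined by ω_φ (single s a) = a * φ (s⁻¹), is a bijection from P₁(G) onto the set of algebraic states of MonoidAlgebra ℂ G, i.e., onto the set of linear functionals ω : MonoidAlgebra ℂ G →ₗ[ℂ] ℂ with ω 1 = 1 and 0 ≤ ω (star f * f) for all f (using ComplexOrder). Moreover this bijection preserves convex combinations: for φ, ψ ∈ P₁(G) and t ∈ [0,1] (t : ℝ), ω_{t•φ+(1−t)•ψ} = t•ω_φ + (1−t)•ω_ψ. -/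
/-- The star operation on `MonoidAlgebra ℂ G`, determined by
`star (single s a) = single s⁻¹ (conj a)`. -/
noncomputable instance monoidAlgebraStar {G : Type*} [Group G] :
    Star (MonoidAlgebra ℂ G) :=
  ⟨fun f => MonoidAlgebra.ofCoeff (Finsupp.equivMapDomain (Equiv.inv G)
      (Finsupp.mapRange (starRingEnd ℂ) (map_zero _) f.coeff))⟩

open ComplexOrder

/-- A function `φ : G → ℂ` is positive definite. -/
def IsPosDefFn {G : Type*} [Group G] (φ : G → ℂ) : Prop :=
  ∀ (n : ℕ) (s : Fin n → G) (ξ : Fin n → ℂ),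
    0 ≤ ∑ j, ∑ k, ξ j * (starRingEnd ℂ) (ξ k) * φ ((s k)⁻¹ * s j)

/-- `P₁(G)`: the set of positive definite functions `φ : G → ℂ` with `φ 1 = 1`. -/
def P1 (G : Type*) [Group G] : Set (G → ℂ) :=
  {φ | IsPosDefFn φ ∧ φ 1 = 1}

/-- The set of algebraic states of `MonoidAlgebra ℂ G`. -/
def algStates (G : Type*) [Group G] : Set (MonoidAlgebra ℂ G →ₗ[ℂ] ℂ) :=
  {ω | ω 1 = 1 ∧ ∀ f : MonoidAlgebra ℂ G, 0 ≤ ω (star f * f)}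

/-! A linear functional on `ℂ[G]` is determined by its values on the basis `single s 1`, so
`ω ↦ (s ↦ ω (single s⁻¹ 1))` inverts `φ ↦ ω_φ`. For `f = ∑ j, single (s j) (c j)`, the value
`ω (star f * f)` is the quadratic form `∑ j k, conj (c j) * c k * φ ((s k)⁻¹ * s j)`, so positivity
of `ω` is exactly positive definiteness of `φ`. Convexity holds because `ω_φ` is linear in `φ`. -/

namespace MonoidAlgebra

variable {G : Type*} [Group G]

lemma coeff_star (f : MonoidAlgebra ℂ G) (s : G) :
    (star f).coeff s = starRingEnd ℂ (f.coeff s⁻¹) := rfl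

lemma star_sum_single {ι : Type*} [Fintype ι] (s : ι → G) (c : ι → ℂ) :
    star (∑ j, single (s j) (c j)) = ∑ j, single (s j)⁻¹ (starRingEnd ℂ (c j)) := by
  classical
  ext x
  simp [coeff_star, coeff_sum, Finsupp.single_apply, inv_eq_iff_eq_inv,
    apply_ite (starRingEnd ℂ)]

lemma sum_support_single {R M : Type*} [Semiring R] (f : MonoidAlgebra R M) :
    ∑ a : f.coeff.support, single (a : M) (f.coeff a) = f := by
  conv_rhs => rw [← sum_coeff_single f]
  exact Finset.sum_coe_sort f.coeff.support fun a => single a (f.coeff a)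

end MonoidAlgebra

open MonoidAlgebra

section

variable {G : Type*} [Group G]

lemma IsPosDefFn.sum_nonneg {φ : G → ℂ} (hφ : IsPosDefFn φ) {ι : Type*} [Fintype ι]
    (s : ι → G) (ξ : ι → ℂ) :
    0 ≤ ∑ j, ∑ k, ξ j * starRingEnd ℂ (ξ k) * φ ((s k)⁻¹ * s j) := by
  let e := (Fintype.equivFin ι).symm
  exact (hφ (Fintype.card ι) (s ∘ e) (ξ ∘ e)).trans_eq <|
    Fintype.sum_equiv e _ _ fun j => Fintype.sum_equiv e _ _ fun k => rfl

noncomputable def functionalOfFn : (G → ℂ) →ₗ[ℂ] MonoidAlgebra ℂ G →ₗ[ℂ] ℂ :=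
  LinearMap.lcomp ℂ ℂ (coeffLinearEquiv ℂ).toLinearMap ∘ₗ
    (Finsupp.llift ℂ ℂ ℂ G).toLinearMap ∘ₗ LinearMap.funLeft ℂ ℂ (·⁻¹)

@[simp]
lemma functionalOfFn_single (φ : G → ℂ) (s : G) (a : ℂ) :
    functionalOfFn φ (single s a) = a * φ s⁻¹ := by
  simp [functionalOfFn, LinearMap.funLeft]

noncomputable def fnOfFunctional (ω : MonoidAlgebra ℂ G →ₗ[ℂ] ℂ) (s : G) : ℂ := ω (single s⁻¹ 1)

lemma fnOfFunctional_functionalOfFn (φ : G → ℂ) : fnOfFunctional (functionalOfFn φ) = φ := by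
  ext s
  simp [fnOfFunctional]

lemma functionalOfFn_fnOfFunctional (ω : MonoidAlgebra ℂ G →ₗ[ℂ] ℂ) :
    functionalOfFn (fnOfFunctional ω) = ω := by
  ext s
  simp [fnOfFunctional]

lemma apply_star_sum_single_mul_sum_single (ω : MonoidAlgebra ℂ G →ₗ[ℂ] ℂ) {ι : Type*}
    [Fintype ι] (s : ι → G) (c : ι → ℂ) :
    ω (star (∑ j, single (s j) (c j)) * ∑ j, single (s j) (c j)) =
      ∑ j, ∑ k, starRingEnd ℂ (c j) * c k * fnOfFunctional ω ((s k)⁻¹ * s j) := by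
  simp only [star_sum_single, Finset.sum_mul_sum, single_mul_single, map_sum, fnOfFunctional,
    mul_inv_rev, inv_inv]
  refine Finset.sum_congr rfl fun j _ => Finset.sum_congr rfl fun k _ => ?_
  simpa using ω.map_smul (starRingEnd ℂ (c j) * c k) (single ((s j)⁻¹ * s k) 1)

lemma isPosDefFn_fnOfFunctional_iff (ω : MonoidAlgebra ℂ G →ₗ[ℂ] ℂ) :
    IsPosDefFn (fnOfFunctional ω) ↔ ∀ f, 0 ≤ ω (star f * f) := by
  constructor
  · intro h f
    rw [← sum_support_single f, apply_star_sum_single_mul_sum_single]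
    simpa using h.sum_nonneg (fun a : f.coeff.support => (a : G))
      fun a => starRingEnd ℂ (f.coeff a)
  · intro h n s ξ
    simpa [apply_star_sum_single_mul_sum_single] using
      h (∑ j, single (s j) (starRingEnd ℂ (ξ j)))

lemma mapsTo_functionalOfFn : Set.MapsTo functionalOfFn (P1 G) (algStates G) := by
  intro φ ⟨hφ, hφ₁⟩
  refine ⟨by simp [one_def, hφ₁], ?_⟩
  rw [← isPosDefFn_fnOfFunctional_iff, fnOfFunctional_functionalOfFn]
  exact hφ

lemma mapsTo_fnOfFunctional : Set.MapsTo fnOfFunctional (algStates G) (P1 G) :=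
  fun ω ⟨hω₁, hω⟩ => ⟨(isPosDefFn_fnOfFunctional_iff ω).2 hω, by simpa [fnOfFunctional, one_def]⟩

end

theorem stmt2_general {G : Type*} [Group G] :
    ∃ Ω : (G → ℂ) → (MonoidAlgebra ℂ G →ₗ[ℂ] ℂ),
      (∀ (φ : G → ℂ) (s : G) (a : ℂ), Ω φ (MonoidAlgebra.single s a) = a * φ s⁻¹) ∧
      Set.BijOn Ω (P1 G) (algStates G) ∧
      (∀ φ ∈ P1 G, ∀ ψ ∈ P1 G, ∀ t : ℝ, 0 ≤ t → t ≤ 1 →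
        Ω (t • φ + (1 - t) • ψ) = t • Ω φ + (1 - t) • Ω ψ) := by
  refine ⟨functionalOfFn, functionalOfFn_single, ?_, fun φ _ ψ _ t _ _ => ?_⟩
  · have hinv : Set.InvOn fnOfFunctional functionalOfFn (P1 G) (algStates G) :=
      ⟨fun φ _ => fnOfFunctional_functionalOfFn φ, fun ω _ => functionalOfFn_fnOfFunctional ω⟩
    exact hinv.bijOn mapsTo_functionalOfFn mapsTo_fnOfFunctional
  · rw [map_add, LinearMap.map_smul_of_tower, LinearMap.map_smul_of_tower]

/-- For a finite group `G`, the map `φ ↦ ω_φ`, where `ω_φ` is the linear functional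
determined by `ω_φ (single s a) = a * φ s⁻¹`, is a bijection from `P₁(G)` onto the set
of algebraic states of `MonoidAlgebra ℂ G`, and it preserves convex combinations. -/
theorem stmt2 {G : Type*} [Group G] [Fintype G] :
    ∃ Ω : (G → ℂ) → (MonoidAlgebra ℂ G →ₗ[ℂ] ℂ),
      (∀ (φ : G → ℂ) (s : G) (a : ℂ), Ω φ (MonoidAlgebra.single s a) = a * φ s⁻¹) ∧
      Set.BijOn Ω (P1 G) (algStates G) ∧
      (∀ φ ∈ P1 G, ∀ ψ ∈ P1 G, ∀ t : ℝ, 0 ≤ t → t ≤ 1 →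
        Ω (t • φ + (1 - t) • ψ) = t • Ω φ + (1 - t) • Ω ψ) :=
  stmt2_general
end

section
/- Let ι be a type, d : ι → ℕ with 0 < d i for every i, and let A = Π i, Matrix (Fin (d i)) (Fin (d i)) ℂ with componentwise multiplication and componentwise conjugate-transpose star. For i₀ : ι let p^{i₀} ∈ A be given by p^{i₀} j = if j = i₀ then 1 else 0. Then an element p ∈ A is a minimal nonzero central projection — i.e., p ≠ 0, p * p = p, star p = p, p * x = x * p for all x ∈ A, and every q ∈ A satisfying q * q = q, star q = q, q * x = x * q for all x, and q * p = q is equal to 0 or to p — if and only if there exists i₀ such that p = p^{i₀}. -/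
/-!
The centre of a full matrix algebra over a field consists of the scalar matrices, so a central
idempotent matrix is `0` or `1`. Centrality and idempotency in `Π i, R i` are checked
componentwise, hence the central projections of the product are the indicators `i ↦ [i ∈ S]`
of subsets `S ⊆ ι`, ordered by inclusion of `S`; the minimal nonzero ones are those of
singletons.
-/

/-- `q * p = q` encodes `q ≤ p` for central projections. -/
def IsMinimalCentralProjection {A : Type*} [Mul A] [Zero A] [Star A] (p : A) : Prop :=
  p ≠ 0 ∧ p * p = p ∧ star p = p ∧ (∀ x : A, p * x = x * p) ∧
    ∀ q : A, q * q = q → star q = q → (∀ x : A, q * x = x * q) → q * p = q → q = 0 ∨ q = p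

theorem Matrix.eq_zero_or_eq_one_of_forall_mul_comm_of_mul_self_eq
    {n α : Type*} [Fintype n] [DecidableEq n] [Nonempty n] [Semiring α] [IsLeftCancelMulZero α]
    {M : Matrix n n α} (hM : ∀ x, M * x = x * M) (hidem : M * M = M) : M = 0 ∨ M = 1 := by
  obtain ⟨c, rfl⟩ := mem_range_scalar_iff_commute_single'.mpr fun i j => (hM _).symm
  have hc : IsIdempotentElem c := (scalar_inj (n := n)).mp (by rwa [map_mul])
  rcases IsIdempotentElem.iff_eq_zero_or_one.mp hc with rfl | rfl
  · exact .inl (map_zero _)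
  · exact .inr (map_one _)

namespace Pi

variable {ι : Type*} [DecidableEq ι] {R : ι → Type*}

theorem apply_mul_comm_of_forall_mul_comm [∀ i, MulZeroClass (R i)] {p : ∀ i, R i}
    (hp : ∀ x, p * x = x * p) (i : ι) (m : R i) : p i * m = m * p i := by
  simpa using congrFun (hp (single i m)) i

theorem single_one_eq_ite [∀ i, Zero (R i)] [∀ i, One (R i)] (i : ι) :
    single i (1 : R i) = fun j => if j = i then 1 else 0 := by
  funext j
  rcases eq_or_ne j i with rfl | h <;> simp [*]

section MulZeroOneClass

variable [∀ i, MulZeroOneClass (R i)] (i : ι)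

theorem single_one_mul_comm (x : ∀ i, R i) : single i 1 * x = x * single i 1 := by
  funext j
  rcases eq_or_ne j i with rfl | h <;> simp [*]

theorem single_one_mul_self : single i (1 : R i) * single i 1 = single i 1 := by
  rw [← single_mul, mul_one]

end MulZeroOneClass

variable [∀ i, Semiring (R i)] [∀ i, StarRing (R i)]

theorem star_single_one (i : ι) : star (single i (1 : R i)) = single i 1 := by
  rw [← single_star, star_one]

variable [∀ i, Nontrivial (R i)]
  (hR : ∀ i (e : R i), (∀ x, e * x = x * e) → e * e = e → e = 0 ∨ e = 1)
include hR

theorem isMinimalCentralProjection_single_one (i : ι) :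
    IsMinimalCentralProjection (single i (1 : R i)) := by
  refine ⟨single_ne_zero_iff.mpr one_ne_zero, single_one_mul_self i, star_single_one i,
    single_one_mul_comm i, fun q hq _ hqc hqp => ?_⟩
  have hq_eq : q = single i (q i) := by rw [← mul_one (q i), single_mul_right, hqp]
  rcases hR i (q i) (apply_mul_comm_of_forall_mul_comm hqc i) (congrFun hq i) with h | h
  · exact .inl (by rw [hq_eq, h, single_zero])
  · exact .inr (by rw [hq_eq, h])

theorem exists_eq_single_one_of_isMinimalCentralProjection {p : ∀ i, R i}
    (hp : IsMinimalCentralProjection p) : ∃ i, p = single i 1 := by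
  obtain ⟨hp0, hpp, -, hpc, hmin⟩ := hp
  obtain ⟨i, hi⟩ := Function.ne_iff.mp hp0
  have hpi : p i = 1 :=
    (hR i (p i) (apply_mul_comm_of_forall_mul_comm hpc i) (congrFun hpp i)).resolve_left hi
  refine ⟨i, ?_⟩
  rcases hmin (single i 1) (single_one_mul_self i) (star_single_one i) (single_one_mul_comm i)
    (by rw [← single_mul_left, hpi, mul_one]) with h | h
  · exact absurd h (single_ne_zero_iff.mpr one_ne_zero)
  · exact h.symm

theorem isMinimalCentralProjection_iff_exists_eq_single_one {p : ∀ i, R i} :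
    IsMinimalCentralProjection p ↔ ∃ i, p = single i 1 :=
  ⟨exists_eq_single_one_of_isMinimalCentralProjection hR,
    fun ⟨i, hi⟩ => hi ▸ isMinimalCentralProjection_single_one hR i⟩

end Pi

/-- In the product star algebra `A = Π i, Matrix (Fin (d i)) (Fin (d i)) ℂ` (with
componentwise product and conjugate-transpose star), an element `p` is a minimal
nonzero central projection if and only if `p` is one of the canonical central
projections `p^{i₀} j = if j = i₀ then 1 else 0`. -/
theorem stmt12 {ι : Type*} [DecidableEq ι] (d : ι → ℕ) (hd : ∀ i, 0 < d i)
    (p : ∀ i, Matrix (Fin (d i)) (Fin (d i)) ℂ) :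
    (p ≠ 0 ∧ p * p = p ∧ star p = p ∧
      (∀ x : ∀ i, Matrix (Fin (d i)) (Fin (d i)) ℂ, p * x = x * p) ∧
      (∀ q : ∀ i, Matrix (Fin (d i)) (Fin (d i)) ℂ,
        q * q = q → star q = q →
        (∀ x : ∀ i, Matrix (Fin (d i)) (Fin (d i)) ℂ, q * x = x * q) →
        q * p = q → q = 0 ∨ q = p)) ↔
    ∃ i₀ : ι, p = fun j => if j = i₀ then 1 else 0 := by
  have : ∀ i, Nonempty (Fin (d i)) := fun i => Fin.pos_iff_nonempty.mp (hd i)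
  simpa only [IsMinimalCentralProjection, Pi.single_one_eq_ite] using
    Pi.isMinimalCentralProjection_iff_exists_eq_single_one
      (fun _ _ => Matrix.eq_zero_or_eq_one_of_forall_mul_comm_of_mul_self_eq) (p := p)
end
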